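/- arXiv:1311.7045 — 4 statements merged into one kernel-verified Lean document; each statement's English description precedes it below -/
import Mathlib

section
/- Let N ≥ 2 and let Φ = {φ_{m,n} : m = 1,…,4; n = 1,…,N−1} be the 4N−4 measurement vectors in ℂ^N defined below. If x, y ∈ ℂ^N both satisfy x[n] ≠ 0 and y[n] ≠ 0 for every n = 2,…,N−1, and |⟨x, φ_{m,n}⟩|² = |⟨y, φ_{m,n}⟩|² for all m = 1,…,4 and n = 1,…,N−1, then there exists c ∈ ℂ with |c| = 1 such that y = c·x. (Theorem 2, part Φ: the intensity measurement map A_Φ is injective on S_Φ = {x ∈ ℂ^N : x[n] ≠ 0 for all n = 2,…,N−1} modulo a unimodular constant.) -/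
open Complex Matrix MeasureTheory

noncomputable section

/-- α = √((1 − 1/√3)/2) -/
def alph : ℂ := (Real.sqrt ((1 - 1/Real.sqrt 3)/2) : ℝ)

/-- β = e^{i5π/4}·√((1 + 1/√3)/2) -/
def beta : ℂ := Complex.exp (Complex.I * (5 * (Real.pi : ℂ) / 4)) *
  (Real.sqrt ((1 + 1/Real.sqrt 3)/2) : ℝ)

/-- the four frame vectors a₁ = (α,β), a₂ = (β,α), a₃ = (α,−β), a₄ = (−β,α) in ℂ² -/
def coef : Fin 4 → Fin 2 → ℂ := ![![alph, beta], ![beta, alph], ![alph, -beta], ![-beta, alph]]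

/-- inner product ⟨x,y⟩ = Σ x[n]·conj(y[n]) -/
def inn {N : ℕ} (x y : Fin N → ℂ) : ℂ := ∑ i, x i * (starRingEnd ℂ) (y i)

/-- Euclidean norm ‖x‖ = √⟨x,x⟩ -/
def nrm {N : ℕ} (x : Fin N → ℂ) : ℝ := Real.sqrt (inn x x).re

/-- outer product x y* -/
def outer {N : ℕ} (x y : Fin N → ℂ) : Matrix (Fin N) (Fin N) ℂ :=
  fun i j => x i * (starRingEnd ℂ) (y j)

/-- measurement vectors φ_{m,n} (0-based n: nonzero entries at positions n and n+1) -/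
def phiv (N : ℕ) (m : Fin 4) (n : ℕ) : Fin N → ℂ :=
  fun i => if (i : ℕ) = n then coef m 0 else if (i : ℕ) = n + 1 then coef m 1 else 0

/-- measurement vectors ψ_{m,n} (0-based n: nonzero entries at positions 0 and n+1) -/
def psiv (N : ℕ) (m : Fin 4) (n : ℕ) : Fin N → ℂ :=
  fun i => if (i : ℕ) = 0 then coef m 0 else if (i : ℕ) = n + 1 then coef m 1 else 0

/-- Hilbert–Schmidt inner product ⟨X,Y⟩ = trace(Y*X) -/
def hs {N : ℕ} (X Y : Matrix (Fin N) (Fin N) ℂ) : ℂ := Matrix.trace (Yᴴ * X)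

/-- Frobenius (Hilbert–Schmidt) norm -/
def frob {N : ℕ} (X : Matrix (Fin N) (Fin N) ℂ) : ℝ := Real.sqrt (Matrix.trace (Xᴴ * X)).re

/-- spectral norm (largest singular value) -/
def specNorm {N : ℕ} (A : Matrix (Fin N) (Fin N) ℂ) : ℝ :=
  sSup {r : ℝ | ∃ v : Fin N → ℂ, nrm v ≤ 1 ∧ r = nrm (A.mulVec v)}

/-!
On a pair of consecutive coordinates `(z₀, z₁)`, the measurement `|z₀ ā + z₁ b̄|²` equals
`|a|²|z₀|² + |b|²|z₁|² + 2 Re (ā b z₀ z̄₁)`. The four vectors `(α, β), (β, α), (α, -β), (-β, α)`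
therefore recover `|z₀|², |z₁|²` (as `|α| ≠ |β|`) and the real parts of `γ z₀ z̄₁` and `γ̄ z₀ z̄₁`
for `γ = ᾱβ`, hence `z₀ z̄₁` itself (as `γ²` is not real). Products of adjacent entries can be
chained through nonzero entries, so all `x i x̄ j` are determined as long as `x` has no zero
between two nonzero entries; and `x x*` determines `x` up to a unimodular factor.
-/

open ComplexConjugate Real

lemma norm_sq_mul_conj_add_mul_conj (a b z₀ z₁ : ℂ) :
    ‖z₀ * conj a + z₁ * conj b‖ ^ 2
      = ‖a‖ ^ 2 * ‖z₀‖ ^ 2 + ‖b‖ ^ 2 * ‖z₁‖ ^ 2 + 2 * (conj a * b * (z₀ * conj z₁)).re := by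
  simp only [Complex.sq_norm, normSq_apply, add_re, add_im, mul_re, mul_im, conj_re, conj_im]
  ring

lemma eq_of_re_mul_eq_of_re_conj_mul_eq {γ T T' : ℂ} (hγ : (γ ^ 2).im ≠ 0) (h : (γ * T).re = (γ * T').re)
    (h' : (conj γ * T).re = (conj γ * T').re) : T = T' := by
  simp only [sq, mul_re, mul_im, conj_re, conj_im] at hγ h h'
  have hre : γ.re ≠ 0 := by rintro h0; simp [h0] at hγ
  have him : γ.im ≠ 0 := by rintro h0; simp [h0] at hγ
  apply Complex.ext
  · exact mul_left_cancel₀ hre (by linarith)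
  · exact mul_left_cancel₀ him (by linarith)

lemma eq_zero_of_mul_add_mul_eq_zero {A B p q : ℝ} (hA : 0 ≤ A) (hB : 0 ≤ B) (hAB : A ≠ B)
    (h₁ : A * p + B * q = 0) (h₂ : B * p + A * q = 0) : p = 0 ∧ q = 0 := by
  have hsub : A - B ≠ 0 := sub_ne_zero.mpr hAB
  have hadd : A + B ≠ 0 := by
    intro h; apply hAB; linarith
  have hdiff : (A - B) * (p - q) = 0 := by linear_combination h₁ - h₂
  obtain rfl : p = q := sub_eq_zero.mp ((mul_eq_zero.mp hdiff).resolve_left hsub)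
  have hsum : (A + B) * p = 0 := by linear_combination h₁
  have hp : p = 0 := (mul_eq_zero.mp hsum).resolve_left hadd
  exact ⟨hp, hp⟩

lemma norm_eq_and_mul_conj_eq_of_four_measurements {a b z₀ z₁ w₀ w₁ : ℂ} (hab : ‖a‖ ≠ ‖b‖)
    (hγ : ((conj a * b) ^ 2).im ≠ 0)
    (h₁ : ‖z₀ * conj a + z₁ * conj b‖ ^ 2 = ‖w₀ * conj a + w₁ * conj b‖ ^ 2)
    (h₂ : ‖z₀ * conj b + z₁ * conj a‖ ^ 2 = ‖w₀ * conj b + w₁ * conj a‖ ^ 2)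
    (h₃ : ‖z₀ * conj a + z₁ * conj (-b)‖ ^ 2 = ‖w₀ * conj a + w₁ * conj (-b)‖ ^ 2)
    (h₄ : ‖z₀ * conj (-b) + z₁ * conj a‖ ^ 2 = ‖w₀ * conj (-b) + w₁ * conj a‖ ^ 2) :
    ‖z₀‖ = ‖w₀‖ ∧ ‖z₁‖ = ‖w₁‖ ∧ z₀ * conj z₁ = w₀ * conj w₁ := by
  simp only [norm_sq_mul_conj_add_mul_conj] at h₁ h₂ h₃ h₄
  simp only [norm_neg, map_neg, neg_mul, mul_neg, neg_re] at h₃ h₄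
  have hAB : ‖a‖ ^ 2 ≠ ‖b‖ ^ 2 := by
    rwa [Ne, sq_eq_sq₀ (norm_nonneg _) (norm_nonneg _)]
  obtain ⟨hP, hQ⟩ := eq_zero_of_mul_add_mul_eq_zero (sq_nonneg ‖a‖) (sq_nonneg ‖b‖) hAB
    (p := ‖z₀‖ ^ 2 - ‖w₀‖ ^ 2) (q := ‖z₁‖ ^ 2 - ‖w₁‖ ^ 2) (by linarith) (by linarith)
  refine ⟨?_, ?_, eq_of_re_mul_eq_of_re_conj_mul_eq hγ (by linarith) ?_⟩
  · rwa [← sq_eq_sq₀ (norm_nonneg _) (norm_nonneg _), ← sub_eq_zero]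
  · rwa [← sq_eq_sq₀ (norm_nonneg _) (norm_nonneg _), ← sub_eq_zero]
  · rw [map_mul, conj_conj, mul_comm a]
    linarith

lemma one_div_sqrt_three_lt_one : 1 / √3 < 1 := by
  rw [div_lt_one (by positivity), Real.lt_sqrt zero_le_one]
  norm_num

lemma alph_sq : alph ^ 2 = ((1 - 1 / √3) / 2 : ℝ) := by
  rw [alph, ← ofReal_pow, Real.sq_sqrt (by linarith [one_div_sqrt_three_lt_one])]

lemma beta_sq : beta ^ 2 = I * ((1 + 1 / √3) / 2 : ℝ) := by
  have hphase : cexp (I * (5 * π / 4)) ^ 2 = I := by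
    rw [← Complex.exp_nat_mul,
      show ((2 : ℕ) : ℂ) * (I * (5 * π / 4)) = π / 2 * I + 2 * π * I by push_cast; ring,
      Complex.exp_add, Complex.exp_pi_div_two_mul_I, Complex.exp_two_pi_mul_I, mul_one]
  rw [beta, mul_pow, hphase, ← ofReal_pow, Real.sq_sqrt (by positivity)]

lemma norm_alph_ne_norm_beta : ‖alph‖ ≠ ‖beta‖ := by
  intro h
  have h2 : ‖alph ^ 2‖ = ‖beta ^ 2‖ := by rw [norm_pow, norm_pow, h]
  rw [alph_sq, beta_sq, norm_mul, norm_I, one_mul, norm_real, norm_real,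
    Real.norm_of_nonneg (by linarith [one_div_sqrt_three_lt_one]),
    Real.norm_of_nonneg (by positivity)] at h2
  have : 0 < 1 / √3 := by positivity
  linarith

lemma im_sq_conj_alph_mul_beta_ne_zero : ((conj alph * beta) ^ 2).im ≠ 0 := by
  rw [alph, conj_ofReal, ← alph, mul_pow, alph_sq, beta_sq, ← mul_assoc, mul_comm _ I, mul_assoc,
    ← ofReal_mul, I_mul_im, ofReal_re]
  have h₁ := one_div_sqrt_three_lt_one
  have h₀ : 0 < 1 / √3 := by positivity
  exact (mul_pos (by linarith) (by linarith)).ne'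

lemma exists_norm_eq_one_smul_of_mul_conj_eq {ι : Type*} {x y : ι → ℂ}
    (h : ∀ i j, x i * conj (x j) = y i * conj (y j)) : ∃ c : ℂ, ‖c‖ = 1 ∧ y = c • x := by
  by_cases hx : x = 0
  · refine ⟨1, norm_one, funext fun i => ?_⟩
    have hi : y i * conj (y i) = 0 := by rw [← h, hx, Pi.zero_apply, zero_mul]
    simpa [hx] using hi
  obtain ⟨k, hk⟩ := Function.ne_iff.mp hx
  have hsq : (normSq (y k) : ℂ) = normSq (x k) := by rw [← mul_conj, ← mul_conj, h k k]
  have hnorm : ‖y k‖ = ‖x k‖ := by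
    rw [← sq_eq_sq₀ (norm_nonneg _) (norm_nonneg _), ← normSq_eq_norm_sq, ← normSq_eq_norm_sq]
    exact_mod_cast hsq
  refine ⟨y k / x k, by rw [norm_div, hnorm, div_self (norm_ne_zero_iff.mpr hk)],
    funext fun i => ?_⟩
  have hcross : y i * x k = y k * x i := by
    apply mul_right_cancel₀ ((map_ne_zero conj).mpr hk)
    calc y i * x k * conj (x k)
      _ = y i * (y k * conj (y k)) := by rw [mul_assoc, mul_conj, mul_conj, hsq]
      _ = y k * (y i * conj (y k)) := by ring
      _ = y k * x i * conj (x k) := by rw [← h, mul_assoc]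
  rw [Pi.smul_apply, smul_eq_mul, div_mul_eq_mul_div, eq_div_iff hk, hcross]

lemma mul_conj_eq_of_adjacent {N : ℕ} {x y : Fin N → ℂ} (hnorm : ∀ i, ‖x i‖ = ‖y i‖)
    (hsupp : (Function.support x).OrdConnected)
    (hadj : ∀ n (hn : n + 1 < N),
      x ⟨n, by omega⟩ * conj (x ⟨n + 1, hn⟩) = y ⟨n, by omega⟩ * conj (y ⟨n + 1, hn⟩)) :
    ∀ i j, x i * conj (x j) = y i * conj (y j) := by
  have hdiag : ∀ i, x i * conj (x i) = y i * conj (y i) := fun i => by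
    rw [mul_conj, mul_conj, normSq_eq_norm_sq, normSq_eq_norm_sq, hnorm]
  have hzero : ∀ i, x i = 0 → y i = 0 := fun i hi => by
    rw [← norm_eq_zero, ← hnorm, hi, norm_zero]
  have hdist : ∀ d (i j : Fin N), (j : ℕ) = i + d → x i * conj (x j) = y i * conj (y j) := by
    intro d
    induction d with
    | zero =>
      intro i j hij
      obtain rfl : i = j := Fin.ext hij.symm
      exact hdiag i
    | succ d ih =>
      intro i j hij
      obtain ⟨m, hm_def⟩ : ∃ m : Fin N, (m : ℕ) = i + d := ⟨⟨i + d, by omega⟩, rfl⟩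
      have hk : (m : ℕ) + 1 < N := by omega
      obtain rfl : j = ⟨m + 1, hk⟩ := Fin.ext (by simp only; omega)
      by_cases hm : x m = 0
      · have hend : x i = 0 ∨ x ⟨m + 1, hk⟩ = 0 := by
          by_contra! hne
          exact hsupp.out hne.1 hne.2 ⟨Fin.mk_le_mk.mpr (by omega), Fin.mk_le_mk.mpr (by omega)⟩ hm
        rcases hend with hi | hj
        · rw [hi, hzero _ hi, zero_mul, zero_mul]
        · rw [hj, hzero _ hj, map_zero, mul_zero, mul_zero]
      · apply mul_right_cancel₀ (mul_ne_zero hm ((map_ne_zero conj).mpr hm))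
        calc x i * conj (x ⟨m + 1, hk⟩) * (x m * conj (x m))
            = x i * conj (x m) * (x m * conj (x ⟨m + 1, hk⟩)) := by ring
          _ = y i * conj (y m) * (y m * conj (y ⟨m + 1, hk⟩)) := by rw [ih i m hm_def, hadj m]
          _ = y i * conj (y ⟨m + 1, hk⟩) * (x m * conj (x m)) := by rw [hdiag m]; ring
  intro i j
  rcases le_total i j with hij | hji
  · exact hdist (j - i) i j (by omega)
  · simpa only [map_mul, conj_conj, mul_comm] using congrArg conj (hdist (i - j) j i (by omega))

lemma inn_phiv {N : ℕ} (x : Fin N → ℂ) (m : Fin 4) (n : ℕ) (hn : n + 1 < N) :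
    inn x (phiv N m n)
      = x ⟨n, by omega⟩ * conj (coef m 0) + x ⟨n + 1, hn⟩ * conj (coef m 1) := by
  unfold inn phiv
  rw [Fintype.sum_eq_add (⟨n, by omega⟩ : Fin N) ⟨n + 1, hn⟩ (by simp [Fin.ext_iff])
    fun i hi => by simp [Fin.ext_iff.not.mp hi.1, Fin.ext_iff.not.mp hi.2]]
  simp

/-- Indices are 0-based: `S_Φ = {x : x[n] ≠ 0 for all n = 2,…,N−1}` reads `0 < i < N − 1`. -/
theorem phase_retrieval_injective_Phi_general (N : ℕ) (hN : 2 ≤ N) (x y : Fin N → ℂ)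
    (hx : ∀ i : Fin N, 0 < (i : ℕ) → (i : ℕ) < N - 1 → x i ≠ 0)
    (hmeas : ∀ (m : Fin 4) (n : ℕ), n + 1 < N →
      ‖inn x (phiv N m n)‖ ^ 2 = ‖inn y (phiv N m n)‖ ^ 2) :
    ∃ c : ℂ, ‖c‖ = 1 ∧ y = c • x := by
  have hpair : ∀ n (hn : n + 1 < N), ‖x ⟨n, by omega⟩‖ = ‖y ⟨n, by omega⟩‖ ∧
      ‖x ⟨n + 1, hn⟩‖ = ‖y ⟨n + 1, hn⟩‖ ∧
      x ⟨n, by omega⟩ * conj (x ⟨n + 1, hn⟩) = y ⟨n, by omega⟩ * conj (y ⟨n + 1, hn⟩) := by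
    intro n hn
    have hm : ∀ m, _ := fun m => inn_phiv x m n hn ▸ inn_phiv y m n hn ▸ hmeas m n hn
    exact norm_eq_and_mul_conj_eq_of_four_measurements norm_alph_ne_norm_beta
      im_sq_conj_alph_mul_beta_ne_zero (hm 0) (hm 1) (hm 2) (hm 3)
  have hnorm : ∀ i : Fin N, ‖x i‖ = ‖y i‖ := by
    rintro ⟨i, hi⟩
    rcases Nat.lt_or_ge (i + 1) N with h | h
    · exact (hpair i h).1
    · obtain rfl : i = N - 2 + 1 := by omega
      exact (hpair (N - 2) (by omega)).2.1
  have hsupp : (Function.support x).OrdConnected := by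
    refine ⟨fun i hi k hk j ⟨hij, hjk⟩ => ?_⟩
    rcases Nat.eq_zero_or_pos j with h | h
    · rwa [show j = i from le_antisymm (Fin.le_def.mpr (by omega)) hij]
    rcases Nat.lt_or_ge j (N - 1) with h' | h'
    · exact hx j h h'
    · rwa [show j = k from le_antisymm hjk (Fin.le_def.mpr (by omega))]
  exact exists_norm_eq_one_smul_of_mul_conj_eq
    (mul_conj_eq_of_adjacent hnorm hsupp fun n hn => (hpair n hn).2.2)

/-- Theorem 2 (part Φ): injectivity modulo a unimodular constant on
`S_Φ = {x : x[n] ≠ 0 for all n = 2,…,N−1}` (1-based), i.e. 0-based indices 0 < i < N−1. -/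
theorem phase_retrieval_injective_Phi (N : ℕ) (hN : 2 ≤ N) (x y : Fin N → ℂ)
    (hx : ∀ i : Fin N, 0 < (i : ℕ) → (i : ℕ) < N - 1 → x i ≠ 0)
    (hy : ∀ i : Fin N, 0 < (i : ℕ) → (i : ℕ) < N - 1 → y i ≠ 0)
    (hmeas : ∀ (m : Fin 4) (n : ℕ), n + 1 < N →
      ‖inn x (phiv N m n)‖ ^ 2 = ‖inn y (phiv N m n)‖ ^ 2) :
    ∃ c : ℂ, ‖c‖ = 1 ∧ y = c • x :=
  phase_retrieval_injective_Phi_general N hN x y hx hmeas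
end
end

section
/- Let K ≥ 2 and let a₁,…,a_{K²} ∈ ℂ^K satisfy ‖a_m‖ = 1 for all m and |⟨a_m, a_n⟩|² = 1/(K+1) for all m ≠ n. For ν ∈ ℝ^{K²} define the Hermitian matrix ΔQ = ((K+1)/K)·Σ_{m=1}^{K²} ν_m·(a_m a_m* − (1/(K+1))·I_K). Then (1/√K)·‖ν‖ ≤ ‖ΔQ‖_F ≤ √(1 + 1/K)·‖ν‖, where ‖·‖_F is the Frobenius (Hilbert–Schmidt) norm and ‖ν‖ is the Euclidean norm of ν. (Lemma 1, with the lower bound corrected: ‖ΔQ‖_F² = (1/K²)·νᵀB ν where B = (K²+K)I − J, J the all-ones matrix, whose extreme eigenvalues are K and K(K+1).) -/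
open Complex Matrix MeasureTheory

noncomputable section

/-!
The shifted projectors `Pₘ = aₘaₘ* − I/(K+1)` have Gram matrix
`trace (Pₘ Pₙ) = (K/(K+1))·δₘₙ − 1/(K+1)²`, so
`‖ΔQ‖_F² = (1 + 1/K)·‖ν‖² − (∑ₘ νₘ)²/K²`.
Dropping the last term gives the upper bound; bounding it by Cauchy–Schwarz,
`(∑ₘ νₘ)² ≤ K²·‖ν‖²`, gives the lower bound.
-/

section Vectors

variable {N : ℕ}

lemma inn_self_eq_sum_normSq (x : Fin N → ℂ) :
    inn x x = ((∑ i, Complex.normSq (x i) : ℝ) : ℂ) := by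
  simp [inn, Complex.mul_conj]

lemma inn_self_eq_one_of_nrm_eq_one {x : Fin N → ℂ} (h : nrm x = 1) : inn x x = 1 := by
  rw [nrm, inn_self_eq_sum_normSq, Complex.ofReal_re, Real.sqrt_eq_one] at h
  rw [inn_self_eq_sum_normSq, h, Complex.ofReal_one]

lemma inn_swap_mul_inn (x y : Fin N → ℂ) : inn y x * inn x y = ((‖inn x y‖ ^ 2 : ℝ) : ℂ) := by
  have hconj : inn y x = starRingEnd ℂ (inn x y) := by
    simp only [inn, map_sum, map_mul, Complex.conj_conj, mul_comm]
  rw [hconj, ← Complex.normSq_eq_norm_sq, mul_comm, Complex.mul_conj]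

lemma trace_outer (x y : Fin N → ℂ) : trace (outer x y) = inn x y := by
  simp [Matrix.trace, outer, inn]

lemma outer_self_mul_outer_self (x y : Fin N → ℂ) :
    outer x x * outer y y = inn y x • outer x y := by
  ext i j
  simp only [Matrix.mul_apply, outer, Matrix.smul_apply, inn, smul_eq_mul, Finset.sum_mul]
  exact Finset.sum_congr rfl fun k _ => by ring

lemma isHermitian_outer_self (x : Fin N → ℂ) : (outer x x).IsHermitian := by
  ext i j
  simp [outer, mul_comm]

lemma trace_outer_self_mul_outer_self (x y : Fin N → ℂ) :
    trace (outer x x * outer y y) = ((‖inn x y‖ ^ 2 : ℝ) : ℂ) := by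
  rw [outer_self_mul_outer_self, trace_smul, trace_outer, smul_eq_mul, inn_swap_mul_inn]

lemma trace_centered_outer_mul_centered_outer {x y : Fin N → ℂ} (hx : inn x x = 1)
    (hy : inn y y = 1) (s : ℝ) :
    trace ((outer x x - (s : ℂ) • 1) * (outer y y - (s : ℂ) • 1)) =
      ((‖inn x y‖ ^ 2 - 2 * s + s ^ 2 * N : ℝ) : ℂ) := by
  simp only [sub_mul, mul_sub, smul_mul_assoc, mul_smul_comm, one_mul, mul_one,
    trace_sub, trace_smul, trace_one, trace_outer, trace_outer_self_mul_outer_self, hx, hy,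
    Fintype.card_fin, smul_eq_mul]
  push_cast
  ring

end Vectors

section QuadraticForm

variable {ι n : Type*} [Fintype ι] [Fintype n]

lemma trace_conjTranspose_mul_self_sum_smul (M : ι → Matrix n n ℂ) (hM : ∀ i, (M i).IsHermitian)
    (ν : ι → ℝ) :
    trace ((∑ i, (ν i : ℂ) • M i)ᴴ * ∑ i, (ν i : ℂ) • M i) =
      ∑ i, ∑ j, (ν i * ν j : ℂ) * trace (M i * M j) := by
  simp only [conjTranspose_sum, conjTranspose_smul, (hM _).eq, Complex.star_def,
    Complex.conj_ofReal, Fintype.sum_mul_sum, trace_sum, smul_mul_smul_comm, trace_smul,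
    smul_eq_mul]

lemma sum_sum_mul_mul_ite [DecidableEq ι] (ν : ι → ℝ) (A B : ℝ) :
    ∑ i, ∑ j, ν i * ν j * (if i = j then A else B) =
      (A - B) * ∑ i, ν i ^ 2 + B * (∑ i, ν i) ^ 2 := by
  have hsplit : ∀ i j, ν i * ν j * (if i = j then A else B) =
      (if i = j then (A - B) * ν i ^ 2 else 0) + B * (ν i * ν j) := by
    intro i j
    split_ifs with h
    · subst h; ring
    · ring
  simp only [hsplit, Finset.sum_add_distrib, Finset.sum_ite_eq, Finset.mem_univ, if_true,
    ← Finset.mul_sum, sq, Fintype.sum_mul_sum]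

end QuadraticForm

lemma frob_ofReal_smul {N : ℕ} (r : ℝ) (X : Matrix (Fin N) (Fin N) ℂ) :
    frob ((r : ℂ) • X) = |r| * frob X := by
  rw [frob, frob, conjTranspose_smul, smul_mul_smul_comm, trace_smul, Complex.star_def,
    Complex.conj_ofReal, smul_eq_mul, ← Complex.ofReal_mul, Complex.re_ofReal_mul,
    Real.sqrt_mul (mul_self_nonneg r), Real.sqrt_mul_self_eq_abs]

lemma re_trace_sq_sum_smul_centered_outer {ι : Type*} [Fintype ι] {N : ℕ}
    (a : ι → Fin N → ℂ) (hnorm : ∀ i, inn (a i) (a i) = 1) {c : ℝ}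
    (hcross : ∀ i j, i ≠ j → ‖inn (a i) (a j)‖ ^ 2 = c) (s : ℝ) (ν : ι → ℝ) :
    (trace ((∑ i, (ν i : ℂ) • (outer (a i) (a i) - (s : ℂ) • 1))ᴴ *
      ∑ i, (ν i : ℂ) • (outer (a i) (a i) - (s : ℂ) • 1))).re =
      (1 - c) * ∑ i, ν i ^ 2 + (c - 2 * s + s ^ 2 * N) * (∑ i, ν i) ^ 2 := by
  classical
  have hherm : ∀ i, (outer (a i) (a i) - (s : ℂ) • 1).IsHermitian := fun i =>
    (isHermitian_outer_self _).sub (isHermitian_one.smul (Complex.conj_ofReal s))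
  have hgram : ∀ i j, trace ((outer (a i) (a i) - (s : ℂ) • 1) * (outer (a j) (a j) - (s : ℂ) • 1))
      = ((if i = j then 1 - 2 * s + s ^ 2 * N else c - 2 * s + s ^ 2 * N : ℝ) : ℂ) := by
    intro i j
    rw [trace_centered_outer_mul_centered_outer (hnorm i) (hnorm j)]
    split_ifs with h
    · rw [h, hnorm j, norm_one, one_pow]
    · rw [hcross i j h]
  simp only [trace_conjTranspose_mul_self_sum_smul _ hherm, hgram, ← Complex.ofReal_mul,
    ← Complex.ofReal_sum, Complex.ofReal_re, sum_sum_mul_mul_ite]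
  ring

lemma frob_smul_sum_smul_centered_outer {K : ℕ} (hK : 0 < K) (a : Fin (K^2) → Fin K → ℂ)
    (hnorm : ∀ m, inn (a m) (a m) = 1)
    (hcross : ∀ m n, m ≠ n → ‖inn (a m) (a n)‖ ^ 2 = 1/(K+1)) (ν : Fin (K^2) → ℝ) :
    frob ((((K : ℂ) + 1) / K) • ∑ m, (ν m : ℂ) •
        (outer (a m) (a m) - (((K : ℂ) + 1)⁻¹) • (1 : Matrix (Fin K) (Fin K) ℂ))) =
      Real.sqrt ((1 + 1 / K) * ∑ m, ν m ^ 2 - (∑ m, ν m) ^ 2 / K ^ 2) := by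
  have hcast : ((K : ℂ) + 1) / K = (((K + 1) / K : ℝ) : ℂ) ∧
      ((K : ℂ) + 1)⁻¹ = (((K + 1)⁻¹ : ℝ) : ℂ) := by
    constructor <;> push_cast <;> rfl
  have hK0 : (0 : ℝ) < K := by exact_mod_cast hK
  rw [hcast.1, hcast.2, frob_ofReal_smul, frob, re_trace_sq_sum_smul_centered_outer a hnorm hcross,
    abs_of_pos (by positivity)]
  conv_lhs => rw [← Real.sqrt_sq (by positivity : (0 : ℝ) ≤ (K + 1) / K),
    ← Real.sqrt_mul (sq_nonneg _)]
  congr 1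
  field_simp
  ring

/-- Lemma 1 (with corrected lower bound): for the noise matrix
ΔQ = ((K+1)/K)·Σ_m ν_m·(a_m a_m* − (1/(K+1))·I_K) one has
(1/√K)·‖ν‖ ≤ ‖ΔQ‖_F ≤ √(1+1/K)·‖ν‖. -/
theorem error_matrix_norm_bounds (K : ℕ) (hK : 2 ≤ K) (a : Fin (K^2) → Fin K → ℂ)
    (hnorm : ∀ m, nrm (a m) = 1)
    (hcross : ∀ m n, m ≠ n → ‖inn (a m) (a n)‖ ^ 2 = 1/(K+1))
    (ν : Fin (K^2) → ℝ) :
    (1 / Real.sqrt K) * Real.sqrt (∑ m, ν m ^ 2) ≤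
      frob ((((K : ℂ) + 1) / K) • ∑ m, (ν m : ℂ) •
        (outer (a m) (a m) - (((K : ℂ) + 1)⁻¹) • (1 : Matrix (Fin K) (Fin K) ℂ))) ∧
    frob ((((K : ℂ) + 1) / K) • ∑ m, (ν m : ℂ) •
        (outer (a m) (a m) - (((K : ℂ) + 1)⁻¹) • (1 : Matrix (Fin K) (Fin K) ℂ))) ≤
      Real.sqrt (1 + 1/K) * Real.sqrt (∑ m, ν m ^ 2) := by
  have hK0 : (0 : ℝ) < K := by exact_mod_cast (by omega : 0 < K)
  rw [frob_smul_sum_smul_centered_outer (by omega) a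
    (fun m => inn_self_eq_one_of_nrm_eq_one (hnorm m)) hcross]
  set E := ∑ m, ν m ^ 2
  set S := ∑ m, ν m
  have hS : S ^ 2 / K ^ 2 ≤ E := by
    rw [div_le_iff₀ (by positivity), mul_comm]
    simpa using sq_sum_le_card_mul_sum_sq (s := Finset.univ) (f := ν)
  constructor
  · calc 1 / Real.sqrt K * Real.sqrt E = Real.sqrt (E / K) := by
          rw [Real.sqrt_div' _ hK0.le]; ring
      _ ≤ Real.sqrt ((1 + 1 / K) * E - S ^ 2 / K ^ 2) := by
          gcongr
          linarith [show (1 + 1 / (K : ℝ)) * E = E + E / K by ring]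
  · rw [← Real.sqrt_mul (by positivity)]
    gcongr
    linarith [div_nonneg (sq_nonneg S) (sq_nonneg (K : ℝ))]
end
end

section
/- Let x ∈ ℂ^K, let Q = xx*, and let ΔQ be a K×K Hermitian matrix. Let λ̃ be the largest eigenvalue of Q̃ = Q + ΔQ, assume λ̃ ≥ 0, let ũ be a corresponding unit eigenvector, and set x̃ = √λ̃ · ũ. Then there exists θ ∈ [−π, π) such that: (i) if ‖x‖² ≥ 3·‖ΔQ‖₂ then ‖x·e^{iθ} − x̃‖ ≤ 2·‖ΔQ‖₂/‖x‖; and (ii) if ‖x‖² < 3·‖ΔQ‖₂ then ‖x·e^{iθ} − x̃‖ ≤ √(7·‖ΔQ‖₂). In both cases ‖ΔQ‖₂ may be replaced by the Frobenius norm ‖ΔQ‖_F, since ‖ΔQ‖₂ ≤ ‖ΔQ‖_F. -/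
open Complex Matrix MeasureTheory

noncomputable section

/-!
Write `a = ⟪ũ, x⟫`, `d = Re ⟪ũ, ΔQ ũ⟫` and `δ = ‖ΔQ‖₂`. Pairing `Q̃ ũ = λ̃ ũ` with `ũ` gives
`λ̃ = |a|² + d`, and the phase `e^{iθ} = e^{-i arg a}` splits the error as
`‖x e^{iθ} - x̃‖² = (√λ̃ - |a|)² + (‖x‖² - |a|²)`.
Up to the factor `conj a`, the component `x - a ũ` of `x` orthogonal to `ũ` is the residual
`d ũ - ΔQ ũ`, so `|a|² (‖x‖² - |a|²) ≤ δ² - d²`. Since `λ̃` dominates the Rayleigh quotient of `x`,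
`λ̃ ≥ ‖x‖² - δ` and hence `|a|² ≥ ‖x‖² - 2δ`; with `(√λ̃ - |a|)² (√λ̃ + |a|)² = d²` the two summands
add up to at most `δ² / (‖x‖² - 2δ) ≤ 4δ² / ‖x‖²` when `‖x‖² ≥ 3δ`. Otherwise the crude bound
`λ̃ ≤ ‖x‖² + δ` already gives `‖x e^{iθ} - x̃‖² ≤ 2‖x‖² + δ < 7δ`.
-/

open InnerProductSpace WithLp
open scoped InnerProductSpace ComplexConjugate ComplexOrder

section Rayleigh

variable {𝕜 E : Type*} [RCLike 𝕜] [NormedAddCommGroup E] [InnerProductSpace 𝕜 E]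
  [FiniteDimensional 𝕜 E]

theorem LinearMap.IsSymmetric.re_inner_le_of_forall_hasEigenvalue_le {T : E →ₗ[𝕜] E}
    (hT : T.IsSymmetric) {lam : ℝ} (hle : ∀ μ : ℝ, Module.End.HasEigenvalue T (μ : 𝕜) → μ ≤ lam)
    (x : E) : RCLike.re (inner 𝕜 (T x) x) ≤ lam * ‖x‖ ^ 2 := by
  rcases eq_or_ne x 0 with rfl | hx
  · simp
  have : Nontrivial E := ⟨⟨x, 0, hx⟩⟩
  have hbdd : BddAbove (Set.range fun v : {v : E // v ≠ 0} ↦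
      RCLike.re (inner 𝕜 (T v) (v : E)) / ‖(v : E)‖ ^ 2) := by
    refine ⟨‖LinearMap.toContinuousLinearMap T‖, ?_⟩
    rintro - ⟨v, rfl⟩
    exact (le_abs_self _).trans
      ((LinearMap.toContinuousLinearMap T).rayleighQuotient_le_norm (v : E))
  calc RCLike.re (inner 𝕜 (T x) x)
      = RCLike.re (inner 𝕜 (T x) x) / ‖x‖ ^ 2 * ‖x‖ ^ 2 := by field_simp
    _ ≤ lam * ‖x‖ ^ 2 := by
      gcongr
      exact (le_ciSup hbdd ⟨x, hx⟩).trans (hle _ hT.hasEigenvalue_iSup_of_finiteDimensional)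

end Rayleigh

lemma sq_sub_add_sub_mul_le {n δ r s d : ℝ} (hδ : 0 ≤ δ) (hr : 0 ≤ r) (hs : 0 ≤ s)
    (hsn : s ^ 2 ≤ n) (hn : 3 * δ ≤ n) (hlow : n - δ ≤ r ^ 2) (hrs : r ^ 2 = s ^ 2 + d)
    (hkey : s ^ 2 * (n - s ^ 2) ≤ δ ^ 2 - d ^ 2) :
    ((r - s) ^ 2 + (n - s ^ 2)) * n ≤ (2 * δ) ^ 2 := by
  have hd2 : d ^ 2 ≤ δ ^ 2 := by nlinarith [mul_nonneg (sq_nonneg s) (sub_nonneg.2 hsn)]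
  have hd : d ≤ δ := abs_le_of_sq_le_sq' hd2 hδ |>.2
  have hs2 : n - 2 * δ ≤ s ^ 2 := by linarith
  have hdiff : (r - s) ^ 2 * (r + s) ^ 2 = d ^ 2 := by
    rw [← mul_pow, mul_comm, ← sq_sub_sq, hrs]; ring
  have hsum : n - 2 * δ ≤ (r + s) ^ 2 := by nlinarith [mul_nonneg hr hs]
  have h1 : (r - s) ^ 2 * (n - 2 * δ) ≤ d ^ 2 :=
    hdiff ▸ mul_le_mul_of_nonneg_left hsum (sq_nonneg _)
  have h2 : (n - s ^ 2) * (n - 2 * δ) ≤ δ ^ 2 - d ^ 2 := by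
    nlinarith [mul_le_mul_of_nonneg_left hs2 (sub_nonneg.2 hsn)]
  nlinarith [sq_nonneg (r - s), sub_nonneg.2 hsn]

section RankOnePerturbation

variable {E : Type*} [NormedAddCommGroup E] [InnerProductSpace ℂ E] {T : E →L[ℂ] E} {x u : E}
  {lam : ℝ}

lemma norm_sub_inner_smul_sq (hu : ‖u‖ = 1) (x : E) :
    ‖x - ⟪u, x⟫_ℂ • u‖ ^ 2 = ‖x‖ ^ 2 - ‖⟪u, x⟫_ℂ‖ ^ 2 := by
  rw [@norm_sub_sq ℂ, inner_smul_right, ← inner_conj_symm, conj_mul', norm_smul, hu, mul_one,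
    ← ofReal_pow, RCLike.re_to_complex, ofReal_re, RCLike.norm_conj]
  ring

lemma norm_smul_sub_smul_sq (hu : ‖u‖ = 1) {ω : ℂ} (hω : ‖ω‖ = 1)
    (hωa : ω * ⟪u, x⟫_ℂ = ‖⟪u, x⟫_ℂ‖) (r : ℝ) :
    ‖ω • x - (r : ℂ) • u‖ ^ 2 = ‖x‖ ^ 2 + r ^ 2 - 2 * r * ‖⟪u, x⟫_ℂ‖ := by
  have hinner : ⟪ω • x, (r : ℂ) • u⟫_ℂ = r * ‖⟪u, x⟫_ℂ‖ := by
    rw [inner_smul_left, inner_smul_right, ← inner_conj_symm, mul_left_comm, ← map_mul, hωa,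
      conj_ofReal]
  rw [@norm_sub_sq ℂ, hinner, norm_smul, norm_smul, hω, hu]
  simp only [RCLike.re_to_complex, ← ofReal_mul, ofReal_re, norm_real, Real.norm_eq_abs, one_mul,
    mul_one, sq_abs]
  ring

lemma norm_sq_sub_opNorm_le_of_re_inner_le
    (hray : re ⟪(rankOne ℂ x x + T) x, x⟫_ℂ ≤ lam * ‖x‖ ^ 2) (hx : x ≠ 0) :
    ‖x‖ ^ 2 - ‖T‖ ≤ lam := by
  have hquad : re ⟪(rankOne ℂ x x + T) x, x⟫_ℂ = ‖x‖ ^ 2 * ‖x‖ ^ 2 + re ⟪T x, x⟫_ℂ := by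
    rw [_root_.add_apply, rankOne_apply, inner_add_left, inner_smul_left, conj_mul',
      inner_self_eq_norm_sq_to_K, add_re, ← ofReal_pow, ofReal_re, norm_pow, RCLike.norm_ofReal,
      abs_norm]
    ring
  have hT : -(‖T‖ * ‖x‖ ^ 2) ≤ re ⟪T x, x⟫_ℂ := by
    refine neg_le_of_abs_le ((abs_re_le_norm _).trans ((norm_inner_le_norm _ _).trans ?_))
    calc ‖T x‖ * ‖x‖ ≤ ‖T‖ * ‖x‖ * ‖x‖ := by gcongr; exact T.le_opNorm x
      _ = ‖T‖ * ‖x‖ ^ 2 := by ring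
  have hx2 : 0 < ‖x‖ ^ 2 := by positivity
  nlinarith

variable (hu : ‖u‖ = 1) (heig : (rankOne ℂ x x + T) u = (lam : ℂ) • u)
include hu heig

lemma eigenvalue_eq_norm_inner_sq_add : lam = ‖⟪u, x⟫_ℂ‖ ^ 2 + re ⟪u, T u⟫_ℂ := by
  have h := congrArg (inner ℂ u) heig
  rw [_root_.add_apply, rankOne_apply, inner_add_right, inner_smul_right,
    inner_smul_right, ← inner_conj_symm x u, conj_mul', inner_self_eq_norm_sq_to_K, hu] at h
  simpa [← ofReal_pow] using congrArg re h.symm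

lemma norm_inner_sq_mul_sub_eq :
    ‖⟪u, x⟫_ℂ‖ ^ 2 * (‖x‖ ^ 2 - ‖⟪u, x⟫_ℂ‖ ^ 2) = ‖T u‖ ^ 2 - re ⟪u, T u⟫_ℂ ^ 2 := by
  set a := ⟪u, x⟫_ℂ
  set d := re ⟪u, T u⟫_ℂ
  have hlam := eigenvalue_eq_norm_inner_sq_add hu heig
  have hvec : conj a • (x - a • u) = (d : ℂ) • u - T u := by
    rw [_root_.add_apply, rankOne_apply, ← inner_conj_symm] at heig
    rw [smul_sub, smul_smul, conj_mul', eq_sub_of_add_eq heig, hlam]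
    push_cast
    module
  have hres : ‖(d : ℂ) • u - T u‖ ^ 2 = ‖T u‖ ^ 2 - d ^ 2 := by
    rw [@norm_sub_sq ℂ, inner_smul_left, norm_smul, hu, conj_ofReal, norm_real, Real.norm_eq_abs,
      mul_one, sq_abs, RCLike.re_to_complex, re_ofReal_mul]
    ring
  rw [← norm_sub_inner_smul_sq hu x, ← mul_pow, ← RCLike.norm_conj, ← norm_smul, hvec, hres]

lemma eigenvalue_le_norm_sq_add_opNorm : lam ≤ ‖x‖ ^ 2 + ‖T‖ := by
  have hs : ‖⟪u, x⟫_ℂ‖ ≤ ‖x‖ := by simpa [hu] using norm_inner_le_norm (𝕜 := ℂ) u x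
  have hd : re ⟪u, T u⟫_ℂ ≤ ‖T‖ := by
    refine (re_le_norm _).trans ((norm_inner_le_norm _ _).trans ?_)
    simpa [hu] using T.le_opNorm u
  rw [eigenvalue_eq_norm_inner_sq_add hu heig]
  gcongr

variable {ω : ℂ} (hω : ‖ω‖ = 1) (hωa : ω * ⟪u, x⟫_ℂ = ‖⟪u, x⟫_ℂ‖) (hlam : 0 ≤ lam)
include hω hωa hlam

theorem norm_smul_sub_sqrt_smul_le_of_three_mul_opNorm_le
    (hray : re ⟪(rankOne ℂ x x + T) x, x⟫_ℂ ≤ lam * ‖x‖ ^ 2) (hbig : 3 * ‖T‖ ≤ ‖x‖ ^ 2) :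
    ‖ω • x - (√lam : ℂ) • u‖ ≤ 2 * ‖T‖ / ‖x‖ := by
  rcases eq_or_ne x 0 with rfl | hx
  · have hT : ‖T‖ = 0 := by
      rw [norm_zero, zero_pow two_ne_zero] at hbig
      linarith [norm_nonneg T]
    have hlam0 : lam = 0 :=
      le_antisymm (by simpa [hT] using eigenvalue_le_norm_sq_add_opNorm hu heig) hlam
    simp [hlam0]
  have hsplit : ‖ω • x - (√lam : ℂ) • u‖ ^ 2 =
      (√lam - ‖⟪u, x⟫_ℂ‖) ^ 2 + (‖x‖ ^ 2 - ‖⟪u, x⟫_ℂ‖ ^ 2) := by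
    rw [norm_smul_sub_smul_sq hu hω hωa]; ring
  have hkey : ((√lam - ‖⟪u, x⟫_ℂ‖) ^ 2 + (‖x‖ ^ 2 - ‖⟪u, x⟫_ℂ‖ ^ 2)) * ‖x‖ ^ 2 ≤
      (2 * ‖T‖) ^ 2 := by
    refine sq_sub_add_sub_mul_le (norm_nonneg T) (Real.sqrt_nonneg lam) (norm_nonneg _) ?_ hbig
      ((norm_sq_sub_opNorm_le_of_re_inner_le hray hx).trans (Real.sq_sqrt hlam).ge)
      ((Real.sq_sqrt hlam).trans (eigenvalue_eq_norm_inner_sq_add hu heig)) ?_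
    · have := norm_inner_le_norm (𝕜 := ℂ) u x
      rw [hu, one_mul] at this
      gcongr
    · rw [norm_inner_sq_mul_sub_eq hu heig]
      have := T.le_opNorm u
      rw [hu, mul_one] at this
      gcongr
  rw [le_div_iff₀ (norm_pos_iff.2 hx)]
  refine pow_le_pow_iff_left₀ (by positivity) (by positivity) two_ne_zero |>.1 ?_
  rwa [mul_pow, hsplit]

theorem norm_smul_sub_sqrt_smul_le_of_lt_three_mul_opNorm (hsmall : ‖x‖ ^ 2 < 3 * ‖T‖) :
    ‖ω • x - (√lam : ℂ) • u‖ ≤ √(7 * ‖T‖) := by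
  have hE := norm_smul_sub_smul_sq hu hω hωa √lam
  rw [Real.sq_sqrt hlam] at hE
  have := eigenvalue_le_norm_sq_add_opNorm hu heig
  rw [Real.le_sqrt (norm_nonneg _) (by positivity), hE]
  nlinarith [Real.sqrt_nonneg lam, norm_nonneg ⟪u, x⟫_ℂ]

end RankOnePerturbation

section EuclideanSpace

variable {N : ℕ}

lemma inn_eq_inner (x y : Fin N → ℂ) : inn x y = ⟪toLp 2 y, toLp 2 x⟫_ℂ := by
  simp [inn, PiLp.inner_apply]

lemma nrm_eq_norm (x : Fin N → ℂ) : nrm x = ‖toLp 2 x‖ := by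
  rw [norm_eq_sqrt_re_inner (𝕜 := ℂ), nrm, inn_eq_inner]
  rfl

lemma outer_mulVec (x y w : Fin N → ℂ) : outer x y *ᵥ w = inn w y • x := by
  ext i
  simp only [outer, mulVec, dotProduct, inn, Pi.smul_apply, smul_eq_mul, Finset.sum_mul]
  exact Finset.sum_congr rfl fun _ _ ↦ by ring

lemma toEuclideanCLM_outer (x y : Fin N → ℂ) :
    toEuclideanCLM (n := Fin N) (𝕜 := ℂ) (outer x y) = rankOne ℂ (toLp 2 x) (toLp 2 y) := by
  ext1 v
  rw [← toLp_ofLp 2 v, toEuclideanCLM_toLp, outer_mulVec, rankOne_apply, inn_eq_inner]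
  rfl

lemma exists_mulVec_eq_smul_of_hasEigenvalue {A : Matrix (Fin N) (Fin N) ℂ} {μ : ℂ}
    (hμ : Module.End.HasEigenvalue (toEuclideanLin A) μ) : ∃ v, v ≠ 0 ∧ A *ᵥ v = μ • v := by
  obtain ⟨v, hv, hv0⟩ := hμ.exists_hasEigenvector
  refine ⟨ofLp v, fun h ↦ hv0 (by simpa using congrArg (toLp 2) h), ?_⟩
  simpa using congrArg ofLp (Module.End.mem_eigenspace_iff.1 hv)

lemma frob_nonneg (A : Matrix (Fin N) (Fin N) ℂ) : 0 ≤ frob A := Real.sqrt_nonneg _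

lemma frob_sq (A : Matrix (Fin N) (Fin N) ℂ) : frob A ^ 2 = ∑ i, ∑ j, ‖A i j‖ ^ 2 := by
  have h : (trace (Aᴴ * A)).re = ∑ j, ∑ i, ‖A i j‖ ^ 2 := by
    simp [trace, diag, mul_apply, re_sum, conjTranspose_apply, Complex.sq_norm, normSq_apply]
  rw [frob, Real.sq_sqrt (by rw [h]; positivity), h, Finset.sum_comm]

lemma nrm_mulVec_le_frob (A : Matrix (Fin N) (Fin N) ℂ) (v : Fin N → ℂ) :
    nrm (A *ᵥ v) ≤ frob A * nrm v := by
  rw [nrm_eq_norm, nrm_eq_norm]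
  refine (pow_le_pow_iff_left₀ (norm_nonneg _) (mul_nonneg (frob_nonneg A) (norm_nonneg _))
    two_ne_zero).1 ?_
  rw [mul_pow, frob_sq, Finset.sum_mul, EuclideanSpace.norm_sq_eq]
  refine Finset.sum_le_sum fun i _ ↦ ?_
  have hrow : (A *ᵥ v) i = ⟪toLp 2 (star (A i)), toLp 2 v⟫_ℂ := by
    simp [mulVec, dotProduct, PiLp.inner_apply, mul_comm]
  have hnorm : ‖toLp 2 (star (A i))‖ ^ 2 = ∑ j, ‖A i j‖ ^ 2 := by
    simp [EuclideanSpace.norm_sq_eq]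
  simp only [hrow, ← hnorm, ← mul_pow]
  gcongr
  exact norm_inner_le_norm _ _

lemma specNorm_eq_norm_toEuclideanCLM (A : Matrix (Fin N) (Fin N) ℂ) :
    specNorm A = ‖toEuclideanCLM (n := Fin N) (𝕜 := ℂ) A‖ := by
  rw [← ContinuousLinearMap.sSup_unitClosedBall_eq_norm, specNorm]
  congr 1
  ext r
  simp only [Set.mem_ofPred_eq, Set.mem_image, Metric.mem_closedBall, dist_zero_right,
    nrm_eq_norm, eq_comm (a := r)]
  constructor
  · rintro ⟨v, hv, rfl⟩
    exact ⟨toLp 2 v, hv, rfl⟩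
  · rintro ⟨v, hv, rfl⟩
    exact ⟨ofLp v, hv, rfl⟩

lemma specNorm_le_frob (A : Matrix (Fin N) (Fin N) ℂ) : specNorm A ≤ frob A := by
  rw [specNorm_eq_norm_toEuclideanCLM]
  refine ContinuousLinearMap.opNorm_le_bound _ (frob_nonneg A) fun v ↦ ?_
  have h := nrm_mulVec_le_frob A (ofLp v)
  rwa [nrm_eq_norm, nrm_eq_norm, ← toEuclideanCLM_toLp, toLp_ofLp] at h

end EuclideanSpace

lemma Complex.exp_neg_arg_mul_I_mul (z : ℂ) : exp (↑(-arg z) * I) * z = ‖z‖ := by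
  conv_lhs => rw [← norm_mul_exp_arg_mul_I z]
  rw [mul_left_comm, ← Complex.exp_add]
  simp

/-- Lemma 2: perturbation bound for rank-one factorization.  If λ̃ ≥ 0 is the largest
eigenvalue of Q̃ = xx* + ΔQ with unit eigenvector ũ and x̃ = √λ̃·ũ, then for some
θ ∈ [−π,π): ‖x e^{iθ} − x̃‖ ≤ 2‖ΔQ‖₂/‖x‖ when ‖x‖² ≥ 3‖ΔQ‖₂, and
‖x e^{iθ} − x̃‖ ≤ √(7‖ΔQ‖₂) when ‖x‖² < 3‖ΔQ‖₂; moreover ‖ΔQ‖₂ ≤ ‖ΔQ‖_F, so the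
spectral norm may be replaced by the Frobenius norm. -/
theorem eigenvector_perturbation (K : ℕ) (x : Fin K → ℂ)
    (ΔQ : Matrix (Fin K) (Fin K) ℂ) (hΔQ : ΔQ.IsHermitian)
    (lam : ℝ) (hlam : 0 ≤ lam) (u : Fin K → ℂ) (hu : nrm u = 1)
    (heig : (outer x x + ΔQ).mulVec u = (lam : ℂ) • u)
    (hmax : ∀ μ : ℝ, (∃ v : Fin K → ℂ, v ≠ 0 ∧
      (outer x x + ΔQ).mulVec v = (μ : ℂ) • v) → μ ≤ lam) :
    ∃ θ : ℝ, -Real.pi ≤ θ ∧ θ < Real.pi ∧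
      (nrm x ^ 2 ≥ 3 * specNorm ΔQ →
        nrm (Complex.exp (θ * Complex.I) • x - (Real.sqrt lam : ℂ) • u)
          ≤ 2 * specNorm ΔQ / nrm x) ∧
      (nrm x ^ 2 < 3 * specNorm ΔQ →
        nrm (Complex.exp (θ * Complex.I) • x - (Real.sqrt lam : ℂ) • u)
          ≤ Real.sqrt (7 * specNorm ΔQ)) ∧
      specNorm ΔQ ≤ frob ΔQ := by
  set X := toLp 2 x
  set U := toLp 2 u
  set T := toEuclideanCLM (n := Fin K) (𝕜 := ℂ) ΔQ
  have hQ : toEuclideanCLM (n := Fin K) (𝕜 := ℂ) (outer x x + ΔQ) = rankOne ℂ X X + T := by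
    rw [map_add, toEuclideanCLM_outer]
  have hU : ‖U‖ = 1 := by rwa [← nrm_eq_norm]
  have heig' : (rankOne ℂ X X + T) U = (lam : ℂ) • U := by
    rw [← hQ, toEuclideanCLM_toLp, heig]
    rfl
  have hray : re ⟪(rankOne ℂ X X + T) X, X⟫_ℂ ≤ lam * ‖X‖ ^ 2 := by
    -- `outer x x` is definitionally `vecMulVec x (star x)`
    have hherm : (outer x x + ΔQ).IsHermitian :=
      (posSemidef_vecMulVec_self_star x).isHermitian.add hΔQ
    rw [← hQ]
    exact (isSymmetric_toEuclideanLin_iff.2 hherm).re_inner_le_of_forall_hasEigenvalue_le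
      (fun μ hμ ↦ hmax μ (exists_mulVec_eq_smul_of_hasEigenvalue hμ)) X
  have hω := norm_exp_ofReal_mul_I (-arg ⟪U, X⟫_ℂ)
  have hωa := exp_neg_arg_mul_I_mul ⟪U, X⟫_ℂ
  refine ⟨-arg ⟪U, X⟫_ℂ, by linarith [arg_le_pi ⟪U, X⟫_ℂ], by linarith [neg_pi_lt_arg ⟪U, X⟫_ℂ],
    fun hbig ↦ ?_, fun hsmall ↦ ?_, specNorm_le_frob ΔQ⟩
  · simp only [nrm_eq_norm, specNorm_eq_norm_toEuclideanCLM, toLp_sub, toLp_smul] at hbig ⊢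
    exact norm_smul_sub_sqrt_smul_le_of_three_mul_opNorm_le hU heig' hω hωa hlam hray hbig
  · simp only [nrm_eq_norm, specNorm_eq_norm_toEuclideanCLM, toLp_sub, toLp_smul] at hsmall ⊢
    exact norm_smul_sub_sqrt_smul_le_of_lt_three_mul_opNorm hU heig' hω hωa hlam hsmall
end
end

section
/- Let N ≥ 2 and let x ∈ ℂ^N with x[1] ≠ 0. Then there exist real numbers γ_{m,n} (m = 1,…,4; n = 1,…,N−1) such that the Hermitian matrix Y = Σ_{n=1}^{N−1} Σ_{m=1}^{4} γ_{m,n} · ψ_{m,n} ψ_{m,n}* satisfies Y x = 0 and ⟨Y u, u⟩ > 0 for every nonzero u ∈ ℂ^N with ⟨u, x⟩ = 0. (Existence of a dual certificate in the range of A_Ψ* for signals in S_Ψ.) -/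
open Complex Matrix MeasureTheory

noncomputable section

/-!
For each `n`, the vector `wₙ = conj(x_{n+1}) e₁ - conj(x₁) e_{n+1}` is orthogonal to `x`. The outer
products of the four vectors `(α, β), (β, α), (α, -β), (-β, α)` span the real space of Hermitian
`2 × 2` matrices, so `wₙ wₙ*` is a real combination of the `ψ_{m,n} ψ_{m,n}*`. Then
`Y = ∑ₙ wₙ wₙ*` kills `x`, and `⟨Y u, u⟩ = ∑ₙ |⟨u, wₙ⟩|²` vanishes only if `x₁ u = u₁ x`, which
together with `u ⊥ x` and `x₁ ≠ 0` forces `u = 0`.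
-/

namespace DualCertificate

open ComplexOrder

lemma inn_eq_dotProduct {N : ℕ} (u v : Fin N → ℂ) : inn u v = u ⬝ᵥ star v := rfl

lemma outer_eq_vecMulVec {N : ℕ} (v w : Fin N → ℂ) : outer v w = vecMulVec v (star w) := rfl

lemma outer_mulVec {N : ℕ} (v w u : Fin N → ℂ) : outer v w *ᵥ u = inn u w • v := by
  rw [outer_eq_vecMulVec, vecMulVec_mulVec, op_smul_eq_smul, dotProduct_comm, inn_eq_dotProduct]

lemma outer_mulVec_mulVec {M N : ℕ} (A : Matrix (Fin N) (Fin M) ℂ) (v w : Fin M → ℂ) :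
    outer (A *ᵥ v) (A *ᵥ w) = A * outer v w * Aᴴ := by
  rw [outer_eq_vecMulVec, outer_eq_vecMulVec, mul_vecMulVec, vecMulVec_mul, star_mulVec]

lemma conj_inn {N : ℕ} (u v : Fin N → ℂ) : starRingEnd ℂ (inn u v) = inn v u := by
  simp [inn, mul_comm]

lemma inn_smul_left {N : ℕ} (c : ℂ) (u v : Fin N → ℂ) : inn (c • u) v = c * inn u v := by
  simp [inn, Finset.mul_sum, mul_assoc]

lemma inn_self_ne_zero {N : ℕ} {v : Fin N → ℂ} (hv : v ≠ 0) : inn v v ≠ 0 := by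
  rwa [inn_eq_dotProduct, Ne, dotProduct_self_star_eq_zero]

lemma isHermitian_outer_self {N : ℕ} (v : Fin N → ℂ) : (outer v v).IsHermitian := by
  rw [outer_eq_vecMulVec]
  exact (posSemidef_vecMulVec_self_star v).isHermitian

def frame4 (α β : ℂ) : Fin 4 → Fin 2 → ℂ := ![![α, β], ![β, α], ![α, -β], ![-β, α]]

lemma coef_eq_frame4 : coef = frame4 alph beta := rfl

theorem exists_sum_smul_outer_frame4_eq {a b : ℝ} (hab : a * b ≠ 0) (hne : a ^ 2 ≠ 2 * b ^ 2)
    (H : Matrix (Fin 2) (Fin 2) ℂ) (hH : H.IsHermitian) :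
    ∃ γ : Fin 4 → ℝ,
      ∑ m, (γ m : ℂ) • outer (frame4 a (b * (1 + I)) m) (frame4 a (b * (1 + I)) m) = H := by
  obtain ⟨h₀, h₁, z, rfl⟩ : ∃ (h₀ h₁ : ℝ) (z : ℂ), H = !![(h₀ : ℂ), z; starRingEnd ℂ z, h₁] := by
    refine ⟨(H 0 0).re, (H 1 1).re, H 0 1, ?_⟩
    ext i j
    fin_cases i <;> fin_cases j
    exacts [(hH.coe_re_apply_self 0).symm, rfl, (hH.apply 1 0).symm, (hH.coe_re_apply_self 1).symm]
  have ha : a ≠ 0 := left_ne_zero_of_mul hab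
  have hb : b ≠ 0 := right_ne_zero_of_mul hab
  have hdet : a ^ 4 - 4 * b ^ 4 ≠ 0 := by
    have hpos : 0 < a ^ 2 + 2 * b ^ 2 := by positivity
    rw [show a ^ 4 - 4 * b ^ 4 = (a ^ 2 - 2 * b ^ 2) * (a ^ 2 + 2 * b ^ 2) by ring]
    exact mul_ne_zero (sub_ne_zero.2 hne) hpos.ne'
  obtain ⟨s, t, hs, ht⟩ :
      ∃ s t : ℝ, a ^ 2 * s + 2 * b ^ 2 * t = h₀ ∧ 2 * b ^ 2 * s + a ^ 2 * t = h₁ :=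
    ⟨(a ^ 2 * h₀ - 2 * b ^ 2 * h₁) / (a ^ 4 - 4 * b ^ 4),
      (a ^ 2 * h₁ - 2 * b ^ 2 * h₀) / (a ^ 4 - 4 * b ^ 4),
      by linear_combination h₀ * div_self hdet, by linear_combination h₁ * div_self hdet⟩
  obtain ⟨p, q, hp, hq⟩ : ∃ p q : ℝ, a * b * (p + q) = z.re ∧ a * b * (q - p) = z.im :=
    ⟨(z.re - z.im) / (2 * a * b), (z.re + z.im) / (2 * a * b), by field_simp; ring,
      by field_simp; ring⟩
  -- the diagonal entries only see `γ₀ + γ₂, γ₁ + γ₃`, the off-diagonal ones `γ₀ - γ₂, γ₁ - γ₃`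
  refine ⟨![(s + p) / 2, (t + q) / 2, (s - p) / 2, (t - q) / 2], ?_⟩
  ext i j
  fin_cases i <;> fin_cases j <;> simp [frame4, outer, Fin.sum_univ_four, Complex.ext_iff] <;>
    and_intros <;> linarith

lemma beta_eq : beta = ((-(√2 / 2) * √((1 + 1 / √3) / 2) : ℝ) : ℂ) * (1 + I) := by
  have h : (5 * Real.pi / 4 : ℝ) = Real.pi / 4 + Real.pi := by ring
  rw [beta, mul_comm I, ← ofReal_ofNat, ← ofReal_ofNat 4, ← ofReal_mul, ← ofReal_div,
    exp_mul_I, ← ofReal_cos, ← ofReal_sin, h, Real.cos_add_pi, Real.sin_add_pi,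
    Real.cos_pi_div_four, Real.sin_pi_div_four]
  push_cast
  ring

theorem exists_sum_smul_outer_coef_eq (H : Matrix (Fin 2) (Fin 2) ℂ) (hH : H.IsHermitian) :
    ∃ γ : Fin 4 → ℝ, ∑ m, (γ m : ℂ) • outer (coef m) (coef m) = H := by
  set u : ℝ := 1 / √3
  have hu₀ : 0 < u := by positivity
  have hu₁ : u < 1 := by
    rw [div_lt_one (by positivity), Real.lt_sqrt zero_le_one]
    norm_num
  set a : ℝ := √((1 - u) / 2)
  set b : ℝ := -(√2 / 2) * √((1 + u) / 2)
  have ha : a ^ 2 = (1 - u) / 2 := Real.sq_sqrt (by linarith)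
  have hb : b ^ 2 = (1 + u) / 4 := by
    rw [mul_pow, neg_sq, div_pow, Real.sq_sqrt zero_le_two, Real.sq_sqrt (by linarith)]
    ring
  have hab : a * b ≠ 0 := by
    have h : (a * b) ^ 2 ≠ 0 := by
      rw [mul_pow, ha, hb]
      exact mul_ne_zero (by linarith) (by linarith)
    exact fun h0 => h (by rw [h0, sq, mul_zero])
  rw [coef_eq_frame4, beta_eq]
  exact exists_sum_smul_outer_frame4_eq hab (by rw [ha, hb]; linarith) H hH

def pairEmbed (N n : ℕ) : Matrix (Fin N) (Fin 2) ℂ :=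
  Matrix.of fun i k => if (i : ℕ) = ![0, n + 1] k then 1 else 0

lemma pairEmbed_mulVec_apply (N n : ℕ) (v : Fin 2 → ℂ) (i : Fin N) :
    (pairEmbed N n *ᵥ v) i = if (i : ℕ) = 0 then v 0 else if (i : ℕ) = n + 1 then v 1 else 0 := by
  simp only [pairEmbed, mulVec, dotProduct, of_apply, Fin.sum_univ_two]
  split_ifs <;> simp_all

lemma psiv_eq_pairEmbed_mulVec (N : ℕ) (m : Fin 4) (n : ℕ) :
    psiv N m n = pairEmbed N n *ᵥ coef m :=
  funext fun i => (pairEmbed_mulVec_apply N n (coef m) i).symm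

lemma inn_pairEmbed_mulVec {M : ℕ} (u : Fin (M + 1) → ℂ) (k : Fin M) (v : Fin 2 → ℂ) :
    inn u (pairEmbed (M + 1) k *ᵥ v)
      = u 0 * starRingEnd ℂ (v 0) + u k.succ * starRingEnd ℂ (v 1) := by
  simp [inn, Fin.sum_univ_succ, pairEmbed_mulVec_apply, Fin.val_eq_val,
    apply_ite (starRingEnd ℂ)]

lemma sum_smul_outer_psiv (N n : ℕ) (γ : Fin 4 → ℝ) :
    ∑ m, (γ m : ℂ) • outer (psiv N m n) (psiv N m n)
      = pairEmbed N n * (∑ m, (γ m : ℂ) • outer (coef m) (coef m)) * (pairEmbed N n)ᴴ := by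
  simp_rw [psiv_eq_pairEmbed_mulVec, outer_mulVec_mulVec, Matrix.mul_sum, Matrix.sum_mul,
    Matrix.mul_smul, Matrix.smul_mul]

theorem exists_sum_smul_outer_psiv_eq (N n : ℕ) (v : Fin 2 → ℂ) :
    ∃ γ : Fin 4 → ℝ, ∑ m, (γ m : ℂ) • outer (psiv N m n) (psiv N m n)
      = outer (pairEmbed N n *ᵥ v) (pairEmbed N n *ᵥ v) := by
  obtain ⟨γ, hγ⟩ := exists_sum_smul_outer_coef_eq (outer v v) (isHermitian_outer_self v)
  exact ⟨γ, by rw [sum_smul_outer_psiv, hγ, outer_mulVec_mulVec]⟩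

lemma sum_outer_self_mulVec {ι : Type*} {N : ℕ} (s : Finset ι) (w : ι → Fin N → ℂ)
    (u : Fin N → ℂ) :
    (∑ k ∈ s, outer (w k) (w k)) *ᵥ u = ∑ k ∈ s, inn u (w k) • w k := by
  simp only [Matrix.sum_mulVec, outer_mulVec]

lemma inn_sum_left {ι : Type*} {N : ℕ} (s : Finset ι) (v : ι → Fin N → ℂ) (u : Fin N → ℂ) :
    inn (∑ k ∈ s, v k) u = ∑ k ∈ s, inn (v k) u := by
  simp only [inn, Finset.sum_apply, Finset.sum_mul]
  exact Finset.sum_comm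

lemma re_inn_sum_outer_self_mulVec_self_pos {ι : Type*} {N : ℕ} {s : Finset ι}
    {w : ι → Fin N → ℂ} {u : Fin N → ℂ} (h : ∃ k ∈ s, inn u (w k) ≠ 0) :
    0 < (inn ((∑ k ∈ s, outer (w k) (w k)) *ᵥ u) u).re := by
  have hterm : ∀ k, inn (inn u (w k) • w k) u = normSq (inn u (w k)) := fun k => by
    rw [inn_smul_left, ← conj_inn u (w k), mul_conj]
  simp only [sum_outer_self_mulVec, inn_sum_left, hterm, re_sum, ofReal_re]
  obtain ⟨k, hk, hne⟩ := h
  exact Finset.sum_pos' (fun _ _ => normSq_nonneg _) ⟨k, hk, normSq_pos.2 hne⟩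

theorem eq_zero_of_inn_eq_zero_of_cross_eq {M : ℕ} {x u : Fin (M + 1) → ℂ} (hx : x 0 ≠ 0)
    (hux : inn u x = 0) (hcross : ∀ k : Fin M, u 0 * x k.succ = u k.succ * x 0) : u = 0 := by
  have hprop : x 0 • u = u 0 • x := by
    ext i
    induction i using Fin.cases with
    | zero => simp [mul_comm]
    | succ k => simp [hcross k, mul_comm]
  have hu₀ : u 0 = 0 := by
    have h : u 0 * inn x x = 0 := by rw [← inn_smul_left, ← hprop, inn_smul_left, hux, mul_zero]
    exact (mul_eq_zero.1 h).resolve_right (inn_self_ne_zero fun h => hx (congrFun h 0))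
  rw [hu₀, zero_smul, smul_eq_zero] at hprop
  exact hprop.resolve_left hx

end DualCertificate

open DualCertificate in
/-- Theorem 5 (part Ψ): for every x ∈ S_Ψ there is a dual certificate
Y = Σ_{m,n} γ_{m,n}·ψ_{m,n} ψ_{m,n}* in the range of A_Ψ* with Yx = 0 and
Y positive definite on the orthogonal complement of x. -/
theorem dual_certificate_exists_Psi (N : ℕ) (hN : 2 ≤ N) (x : Fin N → ℂ)
    (hx : x ⟨0, by omega⟩ ≠ 0) :
    ∃ γ : Fin 4 → ℕ → ℝ,
      ((∑ n ∈ Finset.range (N - 1), ∑ m : Fin 4,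
          (γ m n : ℂ) • outer (psiv N m n) (psiv N m n)).mulVec x = 0) ∧
      (∀ u : Fin N → ℂ, u ≠ 0 → inn u x = 0 →
        0 < (inn ((∑ n ∈ Finset.range (N - 1), ∑ m : Fin 4,
          (γ m n : ℂ) • outer (psiv N m n) (psiv N m n)).mulVec u) u).re) := by
  obtain ⟨M, rfl⟩ : ∃ M, N = M + 1 := ⟨N - 1, by omega⟩
  set v : Fin M → Fin 2 → ℂ := fun k => ![starRingEnd ℂ (x k.succ), -starRingEnd ℂ (x 0)]
  set w : Fin M → Fin (M + 1) → ℂ := fun k => pairEmbed (M + 1) k *ᵥ v k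
  have hw : ∀ u k, inn u (w k) = u 0 * x k.succ - u k.succ * x 0 := fun u k => by
    simp [w, v, inn_pairEmbed_mulVec, sub_eq_add_neg]
  choose γ hγ using fun k : Fin M => exists_sum_smul_outer_psiv_eq (M + 1) k (v k)
  refine ⟨fun m n => if h : n < M then γ ⟨n, h⟩ m else 0, ?_⟩
  have hY : ∑ n ∈ Finset.range (M + 1 - 1), ∑ m : Fin 4,
      ((if h : n < M then γ ⟨n, h⟩ m else 0 : ℝ) : ℂ) • outer (psiv (M + 1) m n) (psiv (M + 1) m n)
        = ∑ k : Fin M, outer (w k) (w k) := by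
    rw [Nat.add_sub_cancel, Finset.sum_range]
    exact Finset.sum_congr rfl fun k _ => by simp only [dif_pos k.isLt, Fin.eta, hγ, w]
  refine ⟨?_, fun u hu hux => ?_⟩ <;> simp only [hY]
  · rw [sum_outer_self_mulVec]
    exact Finset.sum_eq_zero fun k _ => by rw [hw, mul_comm, sub_self, zero_smul]
  · refine re_inn_sum_outer_self_mulVec_self_pos ?_
    by_contra! h
    exact hu (eq_zero_of_inn_eq_zero_of_cross_eq hx hux fun k => by
      simpa [hw, sub_eq_zero] using h k)
end
end
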